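/- Let f₁, f₂, f₃, f₄ ∈ ℤ[t] be monic polynomials that are pairwise coprime in ℚ[t]. If the ℤ[t]-modules ℤ[t]/(f₁f₃f₄) ⊕ ℤ[t]/(f₂f₃) and ℤ[t]/(f₁f₃) ⊕ ℤ[t]/(f₂f₃f₄) are isomorphic, then |Res(f₁,f₄)| = 1 and |Res(f₂,f₄)| = 1. -/

import Mathlib

/-!
Let `e₁, e₂ ∈ ℤ[t]/(f₁f₃) ⊕ ℤ[t]/(f₂f₃f₄)` be the images of the standard generators and reduce
modulo `I = (f₁, f₄)`, which contains `f₁f₃` and `f₂f₃f₄`; the target becomes `S × S` with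
`S = ℤ[t]/I`. As `e₂` is killed by `f₂f₃` and `f₁` is prime to `f₂` in `ℤ[t]` (Gauss's lemma),
`e₂ ∈ f₁ℤ[t]/(f₁f₃) ⊕ f₄ℤ[t]/(f₂f₃f₄)`, so `e₂ ≡ 0 mod I`. Thus `S × S` is cyclic, which forces
`S = 0`: `f₁` and `f₄` are coprime in `ℤ[t]`, and by symmetry so are `f₂` and `f₄`. For monic `f₄`
this is equivalent to `Res(fᵢ, f₄)` being a unit.
-/

/-- The Sylvester-type matrix `A(f,g)` of two integer polynomials: its first
`deg g` columns contain the coefficients of `f, tf, ..., t^{deg g - 1} f` and its last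
`deg f` columns contain the coefficients of `g, tg, ..., t^{deg f - 1} g`,
all expressed in the basis `1, t, ..., t^{deg f + deg g - 1}`. -/
noncomputable def sylvesterMatrix (f g : Polynomial ℤ) :
    Matrix (Fin (f.natDegree + g.natDegree)) (Fin (f.natDegree + g.natDegree)) ℤ :=
  Matrix.of fun i j =>
    if (j : ℕ) < g.natDegree then (Polynomial.X ^ (j : ℕ) * f).coeff (i : ℕ)
    else (Polynomial.X ^ ((j : ℕ) - g.natDegree) * g).coeff (i : ℕ)

/-- The resultant `Res(f,g)` of two integer polynomials, as the determinant of the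
Sylvester matrix. -/
noncomputable def res (f g : Polynomial ℤ) : ℤ := (sylvesterMatrix f g).det

open Polynomial Ideal

theorem Polynomial.coeff_X_pow_mul_eq_ite {R : Type*} [Semiring R] {p : R[X]} {n : ℕ}
    (hp : p.natDegree ≤ n) (k i : ℕ) :
    (X ^ k * p).coeff i = if k ≤ i ∧ i ≤ k + n then p.coeff (i - k) else 0 := by
  rw [coeff_X_pow_mul', ite_and]
  split_ifs <;> first | rfl | exact coeff_eq_zero_of_natDegree_lt (by omega)

theorem sylvesterMatrix_eq_reindex_sylvester (f g : ℤ[X]) :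
    sylvesterMatrix f g = (sylvester g f g.natDegree f.natDegree).reindex
      (finCongr (add_comm _ _)) (finCongr (add_comm _ _)) := by
  ext i j
  obtain ⟨j, rfl⟩ := (finCongr (add_comm g.natDegree f.natDegree)).surjective j
  induction j using Fin.addCases with
  | left j => simp [sylvesterMatrix, sylvester, coeff_X_pow_mul_eq_ite le_rfl]; rfl
  | right j => simp [sylvesterMatrix, sylvester, coeff_X_pow_mul_eq_ite le_rfl]

theorem res_eq_resultant (f g : ℤ[X]) : res f g = resultant g f := by
  rw [res, sylvesterMatrix_eq_reindex_sylvester, Matrix.det_reindex_self, resultant]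

theorem isUnit_res_iff_isCoprime {f g : ℤ[X]} (hg : g.Monic) :
    IsUnit (res f g) ↔ IsCoprime f g := by
  rw [res_eq_resultant, isUnit_resultant_iff_isCoprime hg, isCoprime_comm]

theorem Polynomial.Monic.isRelPrime_of_isCoprime_map {R S : Type*} [CommRing R] [IsDomain R]
    [CommRing S] {φ : R →+* S} (hφ : Function.Injective φ) {p q : R[X]} (hp : p.Monic)
    (h : IsCoprime (p.map φ) (q.map φ)) : IsRelPrime p q := by
  rintro d ⟨e, rfl⟩ hdq
  have hde : d * e ∣ 1 * e := by
    rw [one_mul, ← map_dvd_map φ hφ hp]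
    refine h.dvd_of_dvd_mul_left ?_
    rw [← Polynomial.map_mul]
    exact map_dvd _ (mul_dvd_mul_right hdq e)
  exact isUnit_of_dvd_one ((mul_dvd_mul_iff_right (right_ne_zero_of_mul hp.ne_zero)).1 hde)

theorem Ideal.Quotient.smul_mk_eq_zero_iff_dvd {A : Type*} [CommRing A] (r a x : A) :
    r • Ideal.Quotient.mk (span {a}) x = 0 ↔ a ∣ r * x := by
  rw [Algebra.smul_def, Ideal.Quotient.algebraMap_eq, ← map_mul, Ideal.Quotient.eq_zero_iff_dvd]

theorem subsingleton_of_span_singleton_prod_eq_top {R S : Type*} [CommSemiring R]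
    [CommSemiring S] [Algebra R S] {w : S × S} (hw : Submodule.span R {w} = ⊤) :
    Subsingleton S := by
  have hgen (z : S × S) : ∃ r : R, r • w = z :=
    Submodule.mem_span_singleton.1 (hw ▸ Submodule.mem_top)
  obtain ⟨r, hr⟩ := hgen (1, 0)
  obtain ⟨s, hs⟩ := hgen (0, 1)
  refine subsingleton_of_zero_eq_one <| Eq.symm ?_
  calc (1 : S) = (r • w).1 * (s • w).2 := by simp [hr, hs]
    _ = (r • w).2 * (s • w).1 := by
      simp only [Prod.smul_fst, Prod.smul_snd, smul_mul_smul_comm, mul_comm]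
    _ = 0 := by simp [hr, hs]

theorem isCoprime_of_linearEquiv_prod_quotient {A : Type*} [CommRing A] [IsDomain A]
    [DecompositionMonoid A] {f₁ f₂ f₃ f₄ : A} (h₂ : f₂ ≠ 0) (h₃ : f₃ ≠ 0)
    (h12 : IsRelPrime f₁ f₂)
    (e : ((A ⧸ span {f₁ * f₃ * f₄}) × (A ⧸ span {f₂ * f₃})) ≃ₗ[A]
      ((A ⧸ span {f₁ * f₃}) × (A ⧸ span {f₂ * f₃ * f₄}))) :
    IsCoprime f₁ f₄ := by
  set I := span {f₁} ⊔ span {f₄}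
  have hI₁ : span {f₁ * f₃} ≤ I :=
    (span_singleton_le_iff_mem _).2 (mem_sup_left (mem_span_singleton.2 (dvd_mul_right _ _)))
  have hI₄ : span {f₂ * f₃ * f₄} ≤ I :=
    (span_singleton_le_iff_mem _).2 (mem_sup_right (mem_span_singleton.2 (dvd_mul_left _ _)))
  let π := (Submodule.factor hI₁).prodMap (Submodule.factor hI₄)
  have hπ_mk (x y : A) : π (Ideal.Quotient.mk _ x, Ideal.Quotient.mk _ y) =
      (Ideal.Quotient.mk I x, Ideal.Quotient.mk I y) := rfl
  have htors : (f₂ * f₃) • e (0, 1) = 0 := by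
    rw [← map_smul, Prod.smul_mk, smul_zero, ← Algebra.algebraMap_eq_smul_one,
      Ideal.Quotient.algebraMap_eq, Ideal.Quotient.mk_singleton_self, Prod.mk_zero_zero,
      map_zero]
  have hπ_tors : π (e (0, 1)) = 0 := by
    obtain ⟨x, hx⟩ := Ideal.Quotient.mk_surjective (e (0, 1)).1
    obtain ⟨y, hy⟩ := Ideal.Quotient.mk_surjective (e (0, 1)).2
    rw [← Prod.mk.eta (p := e (0, 1)), ← hx, ← hy, Prod.smul_mk, Prod.mk_eq_zero,
      Ideal.Quotient.smul_mk_eq_zero_iff_dvd, Ideal.Quotient.smul_mk_eq_zero_iff_dvd] at htors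
    have hx₁ : f₁ ∣ x := h12.dvd_of_dvd_mul_left <|
      (mul_dvd_mul_iff_right h₃).1 (by simpa only [mul_right_comm] using htors.1)
    have hy₄ : f₄ ∣ y := (mul_dvd_mul_iff_left (mul_ne_zero h₂ h₃)).1 htors.2
    rw [← Prod.mk.eta (p := e (0, 1)), ← hx, ← hy, hπ_mk, Prod.mk_eq_zero,
      Ideal.Quotient.eq_zero_iff_mem, Ideal.Quotient.eq_zero_iff_mem]
    exact ⟨mem_sup_left (mem_span_singleton.2 hx₁), mem_sup_right (mem_span_singleton.2 hy₄)⟩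
  have hgen : Submodule.span A {π (e (1, 0))} = ⊤ := by
    refine eq_top_iff.2 fun z _ => Submodule.mem_span_singleton.2 ?_
    have hsurj : Function.Surjective (π ∘ e) :=
      ((Submodule.factor_surjective hI₁).prodMap (Submodule.factor_surjective hI₄)).comp
        e.surjective
    obtain ⟨⟨u, v⟩, rfl⟩ := hsurj z
    obtain ⟨x, rfl⟩ := Ideal.Quotient.mk_surjective u
    obtain ⟨y, rfl⟩ := Ideal.Quotient.mk_surjective v
    have hxy : (Ideal.Quotient.mk _ x, Ideal.Quotient.mk _ y) =
        x • ((1, 0) : (A ⧸ span {f₁ * f₃ * f₄}) × (A ⧸ span {f₂ * f₃})) + y • (0, 1) := by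
      simp [Prod.smul_mk, ← Ideal.Quotient.algebraMap_eq, Algebra.algebraMap_eq_smul_one]
    refine ⟨x, ?_⟩
    rw [Function.comp_apply, hxy, map_add, map_smul, map_smul, map_add, map_smul, map_smul,
      hπ_tors, smul_zero, add_zero]
  rw [← isCoprime_span_singleton_iff, isCoprime_iff_sup_eq]
  exact Ideal.Quotient.subsingleton_iff.1 (subsingleton_of_span_singleton_prod_eq_top hgen)

theorem resultants_of_sum_companion_iso_general (f₁ f₂ f₃ f₄ : Polynomial ℤ)
    (h₁ : f₁.Monic) (h₂ : f₂.Monic) (h₃ : f₃.Monic) (h₄ : f₄.Monic)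
    (h12 : IsCoprime (f₁.map (Int.castRingHom ℚ)) (f₂.map (Int.castRingHom ℚ)))
    (hiso : Nonempty (((Polynomial ℤ ⧸ Ideal.span {f₁ * f₃ * f₄}) ×
          (Polynomial ℤ ⧸ Ideal.span {f₂ * f₃})) ≃ₗ[Polynomial ℤ]
        ((Polynomial ℤ ⧸ Ideal.span {f₁ * f₃}) ×
          (Polynomial ℤ ⧸ Ideal.span {f₂ * f₃ * f₄})))) :
    (res f₁ f₄).natAbs = 1 ∧ (res f₂ f₄).natAbs = 1 := by
  obtain ⟨e⟩ := hiso
  have hcast : Function.Injective (Int.castRingHom ℚ) := (Int.castRingHom ℚ).injective_int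
  have hcop₁₄ : IsCoprime f₁ f₄ := isCoprime_of_linearEquiv_prod_quotient h₂.ne_zero h₃.ne_zero
    (h₁.isRelPrime_of_isCoprime_map hcast h12) e
  have hcop₂₄ : IsCoprime f₂ f₄ := isCoprime_of_linearEquiv_prod_quotient h₁.ne_zero h₃.ne_zero
    (h₂.isRelPrime_of_isCoprime_map hcast h12.symm)
    ((LinearEquiv.prodComm _ _ _).trans (e.symm.trans (LinearEquiv.prodComm _ _ _)))
  exact ⟨Int.isUnit_iff_natAbs_eq.1 ((isUnit_res_iff_isCoprime h₄).2 hcop₁₄),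
    Int.isUnit_iff_natAbs_eq.1 ((isUnit_res_iff_isCoprime h₄).2 hcop₂₄)⟩

/-- Theorem 5.1 (b), necessity: for monic `f₁, f₂, f₃, f₄ ∈ ℤ[t]`, pairwise coprime in
`ℚ[t]`, if `ℤ[t]/(f₁f₃f₄) ⊕ ℤ[t]/(f₂f₃) ≅ ℤ[t]/(f₁f₃) ⊕ ℤ[t]/(f₂f₃f₄)` as
`ℤ[t]`-modules, then `|Res(f₁,f₄)| = 1` and `|Res(f₂,f₄)| = 1`. -/
theorem resultants_of_sum_companion_iso (f₁ f₂ f₃ f₄ : Polynomial ℤ)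
    (h₁ : f₁.Monic) (h₂ : f₂.Monic) (h₃ : f₃.Monic) (h₄ : f₄.Monic)
    (h12 : IsCoprime (f₁.map (Int.castRingHom ℚ)) (f₂.map (Int.castRingHom ℚ)))
    (h13 : IsCoprime (f₁.map (Int.castRingHom ℚ)) (f₃.map (Int.castRingHom ℚ)))
    (h14 : IsCoprime (f₁.map (Int.castRingHom ℚ)) (f₄.map (Int.castRingHom ℚ)))
    (h23 : IsCoprime (f₂.map (Int.castRingHom ℚ)) (f₃.map (Int.castRingHom ℚ)))
    (h24 : IsCoprime (f₂.map (Int.castRingHom ℚ)) (f₄.map (Int.castRingHom ℚ)))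
    (h34 : IsCoprime (f₃.map (Int.castRingHom ℚ)) (f₄.map (Int.castRingHom ℚ)))
    (hiso : Nonempty (((Polynomial ℤ ⧸ Ideal.span {f₁ * f₃ * f₄}) ×
          (Polynomial ℤ ⧸ Ideal.span {f₂ * f₃})) ≃ₗ[Polynomial ℤ]
        ((Polynomial ℤ ⧸ Ideal.span {f₁ * f₃}) ×
          (Polynomial ℤ ⧸ Ideal.span {f₂ * f₃ * f₄})))) :
    (res f₁ f₄).natAbs = 1 ∧ (res f₂ f₄).natAbs = 1 :=
  resultants_of_sum_companion_iso_general f₁ f₂ f₃ f₄ h₁ h₂ h₃ h₄ h12 hiso
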